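/- arXiv:2105.12027 — 4 statements merged into one kernel-verified Lean document; each statement's English description precedes it below -/
import Mathlib

section
/- Let d and n be positive integers and let d' be the square-free part of d/gcd(d,n). Suppose a is an integer such that a + k·n is invertible modulo d for some integer k (equivalently, gcd(a, gcd(n,d)) = 1). Then there exists k with 0 ≤ k < g(d') such that a + k·n is invertible modulo d, where g denotes the Jacobsthal function. -/
/-- The Jacobsthal function `g(m)`: the smallest `M` such that every sequence of `M`
consecutive integers contains an integer coprime to `m`. -/
noncomputable def jacobsthal (m : ℕ) : ℕ :=
  sInf {M : ℕ | ∀ a : ℤ, ∃ k : ℕ, k < M ∧ IsCoprime (a + (k : ℤ)) (m : ℤ)}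

/-- The squarefree kernel (radical) of a natural number: the product of its distinct
prime divisors. -/
def squarefreeKernel (m : ℕ) : ℕ := ∏ p ∈ m.primeFactors, p

/-!
Only the primes `p ∣ d` with `p ∤ n` matter: if `p ∣ n` and `p ∣ a + k n` for some `k`, then
`p ∣ a + k n` for every `k`, which the hypothesis excludes. Those primes all divide `d'`, and
their product `r` is coprime to `n`. Writing `u n + v r = 1`, we have
`a + k n ≡ n (u a + k) (mod r)`, so it suffices that `u a + k` is coprime to `d'`, which happens
for some `k < g(d')` by the definition of the Jacobsthal function.
-/

theorem squarefreeKernel_pos (m : ℕ) : 0 < squarefreeKernel m :=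
  Finset.prod_pos fun _ hp => (Nat.prime_of_mem_primeFactors hp).pos

theorem exists_lt_isCoprime_add {m : ℕ} (hm : 0 < m) (a : ℤ) :
    ∃ k : ℕ, k < m ∧ IsCoprime (a + k) m := by
  have hm' : (0 : ℤ) < m := by exact_mod_cast hm
  set r := (1 - a) % (m : ℤ) with hr
  have hr_cast : (r.toNat : ℤ) = r := Int.toNat_of_nonneg (Int.emod_nonneg _ hm'.ne')
  refine ⟨r.toNat, by have := Int.emod_lt_of_pos (1 - a) hm'; omega, ?_⟩
  have hsum : a + (r.toNat : ℤ) = 1 + m * -((1 - a) / m) := by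
    rw [hr_cast, hr, Int.emod_def]; ring
  rw [hsum]
  exact isCoprime_one_left.add_mul_left_left _

theorem exists_lt_jacobsthal_isCoprime_add {m : ℕ} (hm : 0 < m) (a : ℤ) :
    ∃ k : ℕ, k < jacobsthal m ∧ IsCoprime (a + k) m := by
  have hmem : jacobsthal m ∈ {M : ℕ | ∀ a : ℤ, ∃ k : ℕ, k < M ∧ IsCoprime (a + k) m} :=
    Nat.sInf_mem ⟨m, exists_lt_isCoprime_add hm⟩
  exact hmem a

theorem IsCoprime.add_mul_of_bezout {R : Type*} [CommRing R] {n m u v a k : R}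
    (huv : u * n + v * m = 1) (h : IsCoprime (u * a + k) m) : IsCoprime (a + k * n) m := by
  have hsum : a + k * n = n * (u * a + k) + m * (v * a) := by
    linear_combination (-a) * huv
  have hn : IsCoprime n m := ⟨u, v, huv⟩
  rw [hsum]
  exact (hn.mul_left h).add_mul_left_left _

def coprimeRadical (d n : ℕ) : ℕ := ∏ p ∈ d.primeFactors with ¬ p ∣ n, p

theorem coprime_coprimeRadical (d n : ℕ) : n.Coprime (coprimeRadical d n) :=
  Nat.Coprime.prod_right fun p hp => by
    rw [Finset.mem_filter] at hp
    exact ((Nat.prime_of_mem_primeFactors hp.1).coprime_iff_not_dvd.mpr hp.2).symm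

theorem Nat.Prime.dvd_coprimeRadical {p d n : ℕ} (hp : p.Prime) (hpd : p ∣ d) (hd : d ≠ 0)
    (hpn : ¬ p ∣ n) : p ∣ coprimeRadical d n :=
  Finset.dvd_prod_of_mem _ (Finset.mem_filter.mpr ⟨Nat.mem_primeFactors.mpr ⟨hp, hpd, hd⟩, hpn⟩)

theorem coprimeRadical_dvd_squarefreeKernel (d n : ℕ) :
    coprimeRadical d n ∣ squarefreeKernel (d / d.gcd n) := by
  refine Finset.prod_dvd_prod_of_subset _ _ _ fun p hp => ?_
  obtain ⟨hpd, hpn⟩ := Finset.mem_filter.mp hp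
  obtain ⟨hp, hpd, hd⟩ := Nat.mem_primeFactors.mp hpd
  have hquot : d / d.gcd n * d.gcd n = d := Nat.div_mul_cancel (Nat.gcd_dvd_left d n)
  have hpg : p.Coprime (d.gcd n) :=
    hp.coprime_iff_not_dvd.mpr fun h => hpn (h.trans (Nat.gcd_dvd_right d n))
  refine Nat.mem_primeFactors.mpr ⟨hp, hpg.dvd_of_dvd_mul_right (by rwa [hquot]), ?_⟩
  rintro h0
  rw [h0, zero_mul] at hquot
  exact hd hquot.symm

theorem isCoprime_add_mul_of_isCoprime_coprimeRadical {d n : ℕ} {a k₀ k : ℤ} (hd : d ≠ 0)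
    (h₀ : IsCoprime (a + k₀ * n) d) (h : IsCoprime (a + k * n) (coprimeRadical d n)) :
    IsCoprime (a + k * n) d := by
  rw [Int.isCoprime_iff_nat_coprime, Int.natAbs_natCast]
  refine Nat.coprime_of_dvd fun p hp hpx hpd => ?_
  replace hpx : (p : ℤ) ∣ a + k * n := Int.natCast_dvd.mpr hpx
  have hp_unit : ¬ IsUnit (p : ℤ) := (Nat.prime_iff_prime_int.mp hp).not_isUnit
  by_cases hpn : p ∣ n
  · replace hpn : (p : ℤ) ∣ n := Int.natCast_dvd_natCast.mpr hpn
    have hpa : (p : ℤ) ∣ a := by simpa using hpx.sub (hpn.mul_left k)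
    exact hp_unit (h₀.isUnit_of_dvd' (hpa.add (hpn.mul_left k₀))
      (Int.natCast_dvd_natCast.mpr hpd))
  · exact hp_unit (h.isUnit_of_dvd' hpx
      (Int.natCast_dvd_natCast.mpr (hp.dvd_coprimeRadical hpd hd hpn)))

theorem exists_small_coprime_shift_general
    (d n : ℕ) (hd : 0 < d) (a : ℤ)
    (h : ∃ k : ℤ, IsCoprime (a + k * (n : ℤ)) (d : ℤ)) :
    ∃ k : ℕ, k < jacobsthal (squarefreeKernel (d / d.gcd n)) ∧
      IsCoprime (a + (k : ℤ) * (n : ℤ)) (d : ℤ) := by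
  obtain ⟨k₀, h₀⟩ := h
  obtain ⟨u, v, huv⟩ := (coprime_coprimeRadical d n).isCoprime
  obtain ⟨k, hk, hcop⟩ := exists_lt_jacobsthal_isCoprime_add (squarefreeKernel_pos _) (u * a)
  have hcop_radical : IsCoprime (u * a + k) (coprimeRadical d n) :=
    hcop.of_isCoprime_of_dvd_right
      (Int.natCast_dvd_natCast.mpr (coprimeRadical_dvd_squarefreeKernel d n))
  exact ⟨k, hk, isCoprime_add_mul_of_isCoprime_coprimeRadical hd.ne' h₀
    (hcop_radical.add_mul_of_bezout huv)⟩

/-- Let `d` and `n` be positive integers and let `d'` be the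
square-free part of `d / gcd(d,n)`.  Suppose `a` is an integer such that `a + k·n`
is invertible modulo `d` for some integer `k`.  Then there exists `k` with
`0 ≤ k < g(d')` such that `a + k·n` is invertible modulo `d`, where `g` denotes
the Jacobsthal function. -/
theorem exists_small_coprime_shift
    (d n : ℕ) (hd : 0 < d) (hn : 0 < n) (a : ℤ)
    (h : ∃ k : ℤ, IsCoprime (a + k * (n : ℤ)) (d : ℤ)) :
    ∃ k : ℕ, k < jacobsthal (squarefreeKernel (d / d.gcd n)) ∧
      IsCoprime (a + (k : ℤ) * (n : ℤ)) (d : ℤ) :=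
  exists_small_coprime_shift_general d n hd a h
end

section
/- Let G be a finite group acting on a finite set X, let a ∈ X, let S ⊆ G·a be a subset with ε := #S/#(G·a), and let H = {g ∈ G : gS = S}. Suppose that for all g, g' in distinct cosets of H, #(gS ∩ g'S) < ε^4 · #(G·a). Then [G : H] ≤ 3/ε. -/
open Pointwise Finset

/-!
Suppose `[G : H] > 3/ε` and let `N = #(G·a)`. Take `k = ⌊2/ε⌋ ≥ 2` distinct cosets of `H`; the
translates of `S` by their representatives lie in the orbit, have `εN` elements each and meet
pairwise in fewer than `ε⁴N` points, so the Bonferroni inequality gives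
`2kεN < 2N + k(k-1)ε⁴N`. For `x = kε ∈ (2-ε, 2]` this says `2x - x(x-ε)ε² < 2`, whereas that
quadratic is at least `2` at both ends of the interval, hence on all of it.
-/

theorem Finset.two_mul_sum_ncard_le_ncard_biUnion_add_sum_offDiag {ι α : Type*} [DecidableEq ι]
    [Finite α] (A : ι → Set α) (t : Finset ι) :
    2 * ∑ i ∈ t, (A i).ncard ≤
      2 * (⋃ i ∈ t, A i).ncard + ∑ p ∈ t.offDiag, (A p.1 ∩ A p.2).ncard := by
  induction t using Finset.induction_on with
  | empty => simp
  | @insert a t ha ih =>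
    have h_union : (A a ∪ ⋃ i ∈ t, A i).ncard + (A a ∩ ⋃ i ∈ t, A i).ncard =
        (A a).ncard + (⋃ i ∈ t, A i).ncard :=
      Set.ncard_union_add_ncard_inter _ _
    have h_inter : (A a ∩ ⋃ i ∈ t, A i).ncard ≤ ∑ j ∈ t, (A a ∩ A j).ncard := by
      rw [Set.inter_iUnion₂]
      exact t.set_ncard_biUnion_le _
    have h_offDiag : ∑ p ∈ (insert a t).offDiag, (A p.1 ∩ A p.2).ncard =
        ∑ p ∈ t.offDiag, (A p.1 ∩ A p.2).ncard + 2 * ∑ j ∈ t, (A a ∩ A j).ncard := by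
      rw [offDiag_insert ha, sum_union, sum_union, sum_product, sum_product_right,
        sum_singleton, sum_singleton]
      · simp only [Set.inter_comm (A _) (A a)]
        ring
      · rw [disjoint_left]; aesop
      · rw [disjoint_union_left, disjoint_left, disjoint_left]; aesop
    rw [sum_insert ha, set_biUnion_insert, h_offDiag]
    omega

theorem mul_ncard_lt_of_ncard_inter_lt {ι α : Type*} [DecidableEq ι] [Finite α]
    {A : ι → Set α} {t : Finset ι} {B : Set α} {m K : ℝ} (hAB : ∀ i ∈ t, A i ⊆ B)
    (hm : ∀ i ∈ t, ((A i).ncard : ℝ) = m)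
    (hK : ∀ i ∈ t, ∀ j ∈ t, i ≠ j → ((A i ∩ A j).ncard : ℝ) < K) (ht : 2 ≤ #t) :
    2 * #t * m < 2 * B.ncard + #t * (#t - 1) * K := by
  have h_bonferroni : 2 * ∑ i ∈ t, ((A i).ncard : ℝ) ≤
      2 * (⋃ i ∈ t, A i).ncard + ∑ p ∈ t.offDiag, ((A p.1 ∩ A p.2).ncard : ℝ) := by
    exact_mod_cast t.two_mul_sum_ncard_le_ncard_biUnion_add_sum_offDiag A
  have h_sum : ∑ i ∈ t, ((A i).ncard : ℝ) = #t * m := by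
    rw [sum_congr rfl hm, sum_const, nsmul_eq_mul]
  have h_union : ((⋃ i ∈ t, A i).ncard : ℝ) ≤ B.ncard := by
    exact_mod_cast Set.ncard_le_ncard (Set.iUnion₂_subset hAB)
  have h_card : (#t.offDiag : ℝ) = #t * (#t - 1) := by
    rw [offDiag_card, Nat.cast_sub (Nat.le_mul_self _)]
    push_cast
    ring
  have h_pairs : ∑ p ∈ t.offDiag, ((A p.1 ∩ A p.2).ncard : ℝ) < #t * (#t - 1) * K := by
    have h_ne : t.offDiag.Nonempty := by
      rw [← card_pos, offDiag_card]
      exact Nat.sub_pos_of_lt (by nlinarith)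
    calc ∑ p ∈ t.offDiag, ((A p.1 ∩ A p.2).ncard : ℝ)
        < ∑ _p ∈ t.offDiag, K := by
          refine sum_lt_sum_of_nonempty h_ne fun p hp => ?_
          obtain ⟨hp₁, hp₂, hp⟩ := mem_offDiag.1 hp
          exact hK _ hp₁ _ hp₂ hp
      _ = #t * (#t - 1) * K := by rw [sum_const, nsmul_eq_mul, h_card]
  linarith

theorem two_le_two_mul_sub_mul_sub_mul_sq {ε x : ℝ} (hε0 : 0 < ε) (hε1 : ε ≤ 1)
    (hx : 2 - ε ≤ x) (hx' : x ≤ 2) : 2 ≤ 2 * x - x * (x - ε) * ε ^ 2 := by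
  have hq : 0 < 1 + ε - ε ^ 2 := by nlinarith
  -- With `f x = 2x - x(x-ε)ε² - 2`, one has `f (2-ε) = 2(1-ε)²q`, `f 2 = 2(1-ε)q` for `q = 1+ε-ε²`
  -- and `ε f x = (2-x) f (2-ε) + (x-2+ε) f 2 + ε³ (x-2+ε)(2-x)`.
  have key : 0 ≤ ε * (2 * x - x * (x - ε) * ε ^ 2 - 2) := by
    have h1 := mul_nonneg (mul_nonneg (sq_nonneg (1 - ε)) hq.le) (sub_nonneg.2 hx')
    have h2 := mul_nonneg (mul_nonneg (sub_nonneg.2 hε1) hq.le) (sub_nonneg.2 hx)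
    have h3 := mul_nonneg (pow_nonneg hε0.le 3) (mul_nonneg (sub_nonneg.2 hx) (sub_nonneg.2 hx'))
    nlinarith
  nlinarith [(mul_nonneg_iff_of_pos_left hε0).1 key]

theorem Subgroup.exists_finset_card_eq_of_le_index {G : Type*} [Group G] {H : Subgroup G}
    {k : ℕ} (hk : k ≤ H.index) (hH : H.index ≠ 0) : ∃ T : Finset (G ⧸ H), #T = k := by
  have : H.FiniteIndex := ⟨hH⟩
  have := Fintype.ofFinite (G ⧸ H)
  obtain ⟨T, -, hT⟩ := exists_subset_card_eq (s := (univ : Finset (G ⧸ H))) (n := k)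
    (by rwa [card_univ, ← Nat.card_eq_fintype_card])
  exact ⟨T, hT⟩

theorem index_le_of_small_translate_intersections_general
    (G X : Type) [Group G] [MulAction G X] [Fintype X]
    (a : X) (S : Set X) (hSne : S.Nonempty) (hS : S ⊆ MulAction.orbit G a)
    (ε : ℝ) (hε : ε = (Nat.card ↥S : ℝ) / (Nat.card ↥(MulAction.orbit G a) : ℝ))
    (H : Subgroup G)
    (hyp : ∀ g g' : G, g⁻¹ * g' ∉ H →
      (Nat.card ↥(g • S ∩ g' • S) : ℝ)
        < ε ^ 4 * (Nat.card ↥(MulAction.orbit G a) : ℝ)) :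
    (H.index : ℝ) ≤ 3 / ε := by
  classical
  set O := MulAction.orbit G a
  simp only [Nat.card_coe_set_eq] at hε hyp
  have hN : (0 : ℝ) < O.ncard := by
    exact_mod_cast (Set.ncard_pos O.toFinite).2 ⟨a, MulAction.mem_orbit_self a⟩
  have hε0 : 0 < ε := hε ▸ div_pos (by exact_mod_cast (Set.ncard_pos S.toFinite).2 hSne) hN
  have hε1 : ε ≤ 1 := hε ▸ div_le_one_of_le₀ (by exact_mod_cast Set.ncard_le_ncard hS) hN.le
  by_contra! h_index
  set k := ⌊2 / ε⌋₊
  have hk_le : (k : ℝ) ≤ 2 / ε := Nat.floor_le (by positivity)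
  have hk_lt : 2 / ε < k + 1 := Nat.lt_floor_add_one _
  have hk_two : 2 ≤ k := Nat.le_floor (by rw [Nat.cast_ofNat, le_div_iff₀ hε0]; linarith)
  have hk_index : k ≤ H.index := by
    have : 2 / ε < 3 / ε := div_lt_div_of_pos_right (by norm_num) hε0
    exact_mod_cast (hk_le.trans this.le).trans h_index.le
  obtain ⟨T, hT⟩ := H.exists_finset_card_eq_of_le_index hk_index
    (Nat.cast_pos.1 ((div_pos three_pos hε0).trans h_index)).ne'
  have h_count := mul_ncard_lt_of_ncard_inter_lt (A := fun q : G ⧸ H => q.out • S) (t := T)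
    (B := O) (m := ε * O.ncard) (K := ε ^ 4 * O.ncard)
    (fun q _ => by simpa [O, MulAction.smul_orbit] using Set.smul_set_mono (a := q.out) hS)
    (fun q _ => by rw [Set.ncard_smul_set, hε, div_mul_cancel₀ _ hN.ne'])
    (fun q _ q' _ hne => hyp _ _ fun hmem =>
      hne (by rw [← q.out_eq, ← q'.out_eq]; exact QuotientGroup.eq.2 hmem))
    (hT ▸ hk_two)
  rw [hT] at h_count
  have h_lower := two_le_two_mul_sub_mul_sub_mul_sq (x := k * ε) hε0 hε1
    (by rw [div_lt_iff₀ hε0] at hk_lt; linarith) (by rwa [le_div_iff₀ hε0] at hk_le)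
  linarith [mul_le_mul_of_nonneg_right h_lower hN.le]

/-- counting step.  Let `G` be a finite group acting on a finite set
`X`, let `a ∈ X`, let `S ⊆ G·a` be a (nonempty) subset with density
`ε = #S/#(G·a)`, and let `H = {g ∈ G : gS = S}` be the setwise stabilizer of `S`.
Suppose that for all `g, g'` in distinct cosets of `H` one has
`#(gS ∩ g'S) < ε⁴ · #(G·a)`.  Then `[G : H] ≤ 3/ε`. -/
theorem index_le_of_small_translate_intersections
    (G X : Type) [Group G] [Fintype G] [MulAction G X] [Fintype X]
    (a : X) (S : Set X) (hSne : S.Nonempty) (hS : S ⊆ MulAction.orbit G a)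
    (ε : ℝ) (hε : ε = (Nat.card ↥S : ℝ) / (Nat.card ↥(MulAction.orbit G a) : ℝ))
    (H : Subgroup G) (hH : H = MulAction.stabilizer G S)
    (hyp : ∀ g g' : G, g⁻¹ * g' ∉ H →
      (Nat.card ↥(g • S ∩ g' • S) : ℝ)
        < ε ^ 4 * (Nat.card ↥(MulAction.orbit G a) : ℝ)) :
    (H.index : ℝ) ≤ 3 / ε :=
  index_le_of_small_translate_intersections_general G X a S hSne hS ε hε H hyp
end

section
/- Let M ⊆ N be finite dimensional semisimple Q-algebras, E/Q a field extension, and i_E : N ⊗_Q E → End_E(V) a faithful representation on a finite dimensional E-vector space V. Let u be an idempotent of N and w an element of M ⊗_Q E with i_E(w)·V ⊆ i_E(u)·V. Then there exists an idempotent v ∈ M with i_E(w)·V ⊆ i_E(v)·V ⊆ i_E(u)·V. -/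
/-!
The elements `m ∈ M` with `u * f m = f m` form the right ideal `f⁻¹(uN)` of `M`; as `M` is
semisimple it is `vM` for an idempotent `v`, so `v * m = m ↔ u * f m = f m`. Faithfulness of `i`
turns `i(w)V ⊆ i(u)V` into `(1 ⊗ u) * w = w`, i.e. `w` is killed by `E ⊗` of the map
`m ↦ u * f m - f m`. As `E` is flat over `ℚ`, `w` then lies in `E ⊗` the kernel of that map, which
is also the kernel of `m ↦ v * m - m`: so `(1 ⊗ v) * w = w`, and both inclusions follow.
-/

open TensorProduct MulOpposite

theorem Module.End.range_le_range_iff_mul_eq {R A V : Type*} [CommRing R] [Ring A] [Algebra R A]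
    [AddCommGroup V] [Module R V] {i : A →ₐ[R] Module.End R V} (hi : Function.Injective i)
    {x : A} (hx : IsIdempotentElem x) (y : A) :
    LinearMap.range (i y) ≤ LinearMap.range (i x) ↔ x * y = y := by
  rw [← LinearMap.IsIdempotentElem.comp_eq_right_iff (hx.map i), ← Module.End.mul_eq_comp,
    ← map_mul, hi.eq_iff]

theorem IsIdempotentElem.op_mem_span_op_iff {S : Type*} [Ring S] {e : S} (he : IsIdempotentElem e)
    (y : S) : op y ∈ Ideal.span {op e} ↔ e * y = y := by
  rw [Ideal.mem_span_singleton']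
  constructor
  · rintro ⟨a, ha⟩
    rw [← unop_inj, unop_mul, unop_op, unop_op] at ha
    rw [← ha, ← mul_assoc, he.eq]
  · intro h
    exact ⟨op y, by rw [← op_mul, h]⟩

theorem IsSemisimpleRing.exists_isIdempotentElem_forall_op_mem_iff {R : Type*} [Ring R]
    [IsSemisimpleRing R] (I : Ideal Rᵐᵒᵖ) :
    ∃ v : R, IsIdempotentElem v ∧ ∀ y : R, op y ∈ I ↔ v * y = y := by
  obtain ⟨e, he, rfl⟩ := IsSemisimpleRing.ideal_eq_span_idempotent I
  have hv : IsIdempotentElem e.unop := by rw [IsIdempotentElem, ← unop_mul, he.eq]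
  exact ⟨e.unop, hv, hv.op_mem_span_op_iff⟩

theorem LinearMap.lTensor_eq_zero_of_ker_le {R E M N P : Type*} [CommRing R] [AddCommGroup E]
    [Module R E] [Module.Flat R E] [AddCommGroup M] [Module R M] [AddCommGroup N] [Module R N]
    [AddCommGroup P] [Module R P] {g : M →ₗ[R] N} {h : M →ₗ[R] P} (hker : ker g ≤ ker h)
    {x : E ⊗[R] M} (hx : g.lTensor E x = 0) : h.lTensor E x = 0 := by
  obtain ⟨y, rfl⟩ := (Module.Flat.lTensor_exact E g.exact_subtype_ker_map x).mp hx
  have hzero : h ∘ₗ (ker g).subtype = 0 := by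
    ext ⟨m, hm⟩
    exact hker hm
  rw [← LinearMap.comp_apply, ← LinearMap.lTensor_comp, hzero, LinearMap.lTensor_zero,
    LinearMap.zero_apply]

theorem Algebra.TensorProduct.lTensor_mulLeft_sub_one_comp {R E A B : Type*} [CommRing R]
    [CommRing E] [Algebra R E] [Ring A] [Algebra R A] [Ring B] [Algebra R B]
    (φ : A →ₐ[R] B) (b : B) (x : E ⊗[R] A) :
    ((LinearMap.mulLeft R b - 1) ∘ₗ φ.toLinearMap).lTensor E x =
      (1 ⊗ₜ b) * map (AlgHom.id R E) φ x - map (AlgHom.id R E) φ x := by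
  induction x using TensorProduct.induction_on with
  | zero => simp
  | tmul c a => simp [tmul_sub]
  | add x y hx hy => simp only [map_add, hx, hy, mul_add]; abel

theorem idempotent_interpolation_general
    (M N : Type) [Ring M] [Ring N] [Algebra ℚ M] [Algebra ℚ N]
    [IsSemisimpleRing M]
    (f : M →ₐ[ℚ] N)
    (E : Type) [Field E] [Algebra ℚ E]
    (V : Type) [AddCommGroup V] [Module E V]
    (i : (E ⊗[ℚ] N) →ₐ[E] Module.End E V) (hi : Function.Injective i)
    (u : N) (hu : IsIdempotentElem u)
    (w : E ⊗[ℚ] M)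
    (hw : LinearMap.range (i (Algebra.TensorProduct.map (AlgHom.id ℚ E) f w)) ≤
          LinearMap.range (i ((1 : E) ⊗ₜ[ℚ] u))) :
    ∃ v : M, IsIdempotentElem v ∧
      LinearMap.range (i (Algebra.TensorProduct.map (AlgHom.id ℚ E) f w)) ≤
        LinearMap.range (i ((1 : E) ⊗ₜ[ℚ] f v)) ∧
      LinearMap.range (i ((1 : E) ⊗ₜ[ℚ] f v)) ≤
        LinearMap.range (i ((1 : E) ⊗ₜ[ℚ] u)) := by
  -- right ideals of `M` are left ideals of `Mᵐᵒᵖ`; this one is `f⁻¹(uN)`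
  obtain ⟨v, hv, hI⟩ := IsSemisimpleRing.exists_isIdempotentElem_forall_op_mem_iff
    ((Ideal.span {op u}).comap f.toRingHom.op)
  have hfix (m : M) : v * m = m ↔ u * f m = f m := (hI m).symm.trans (hu.op_mem_span_op_iff (f m))
  have hker : LinearMap.ker ((LinearMap.mulLeft ℚ u - 1) ∘ₗ f.toLinearMap) ≤
      LinearMap.ker ((LinearMap.mulLeft ℚ v - 1) ∘ₗ (AlgHom.id ℚ M).toLinearMap) := fun m hm => by
    simpa [sub_eq_zero, hfix] using hm
  have h1u : IsIdempotentElem ((1 : E) ⊗ₜ[ℚ] u) := by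
    rw [IsIdempotentElem, Algebra.TensorProduct.tmul_mul_tmul, one_mul, hu.eq]
  have h1v : IsIdempotentElem ((1 : E) ⊗ₜ[ℚ] f v) := by
    rw [IsIdempotentElem, Algebra.TensorProduct.tmul_mul_tmul, one_mul, ← map_mul, hv.eq]
  have huw := (Module.End.range_le_range_iff_mul_eq hi h1u _).1 hw
  have hvw : (1 ⊗ₜ v) * w = w := by
    have := LinearMap.lTensor_eq_zero_of_ker_le (E := E) (x := w) hker
      (by rw [Algebra.TensorProduct.lTensor_mulLeft_sub_one_comp, huw, sub_self])
    rwa [Algebra.TensorProduct.lTensor_mulLeft_sub_one_comp, Algebra.TensorProduct.map_id,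
      AlgHom.id_apply, sub_eq_zero] at this
  refine ⟨v, hv, (Module.End.range_le_range_iff_mul_eq hi h1v _).2 ?_,
    (Module.End.range_le_range_iff_mul_eq hi h1u _).2 ?_⟩
  · rw [← AlgHom.id_apply (R := ℚ) (1 : E), ← Algebra.TensorProduct.map_tmul, ← map_mul, hvw]
  · rw [Algebra.TensorProduct.tmul_mul_tmul, one_mul, (hfix v).1 hv.eq]

/-- idempotent interpolation lemma.  Let `M ⊆ N` be finite
dimensional semisimple `ℚ`-algebras (the inclusion being an injective `ℚ`-algebra
map `f`), `E/ℚ` a field extension, and `i : N ⊗_ℚ E → End_E(V)` a faithful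
representation on a finite dimensional `E`-vector space `V` (here written with the
tensor factors as `E ⊗[ℚ] N`).  Let `u` be an idempotent of `N` and `w` an element
of `M ⊗_ℚ E` with `i(w)·V ⊆ i(u)·V`.  Then there exists an idempotent `v ∈ M` with
`i(w)·V ⊆ i(v)·V ⊆ i(u)·V`. -/
theorem idempotent_interpolation
    (M N : Type) [Ring M] [Ring N] [Algebra ℚ M] [Algebra ℚ N]
    [FiniteDimensional ℚ M] [FiniteDimensional ℚ N]
    [IsSemisimpleRing M] [IsSemisimpleRing N]
    (f : M →ₐ[ℚ] N) (hf : Function.Injective f)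
    (E : Type) [Field E] [Algebra ℚ E]
    (V : Type) [AddCommGroup V] [Module E V] [FiniteDimensional E V]
    (i : (E ⊗[ℚ] N) →ₐ[E] Module.End E V) (hi : Function.Injective i)
    (u : N) (hu : IsIdempotentElem u)
    (w : E ⊗[ℚ] M)
    (hw : LinearMap.range (i (Algebra.TensorProduct.map (AlgHom.id ℚ E) f w)) ≤
          LinearMap.range (i ((1 : E) ⊗ₜ[ℚ] u))) :
    ∃ v : M, IsIdempotentElem v ∧
      LinearMap.range (i (Algebra.TensorProduct.map (AlgHom.id ℚ E) f w)) ≤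
        LinearMap.range (i ((1 : E) ⊗ₜ[ℚ] f v)) ∧
      LinearMap.range (i ((1 : E) ⊗ₜ[ℚ] f v)) ≤
        LinearMap.range (i ((1 : E) ⊗ₜ[ℚ] u)) :=
  idempotent_interpolation_general M N f E V i hi u hu w hw
end

section
/- Let M ⊆ B be semisimple Q-algebras, π a central idempotent with B = M[π], and V a Q-vector space with a faithful B-action. Let u be an idempotent of B and set I = uB + πB. Then for b ∈ B: b ∈ I if and only if b·V + π·V ⊆ u·V + π·V. -/
/-- ideal membership criterion.  Let `M ⊆ B` be (finite
dimensional) semisimple `ℚ`-algebras, `π` a central idempotent with `B = M[π]`, and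
`V` a `ℚ`-vector space with a faithful `B`-action.  Let `u` be an idempotent of `B`
and set `I = uB + πB`.  Then for `b ∈ B`:  `b ∈ I` if and only if
`b·V + π·V ⊆ u·V + π·V`. -/
theorem mem_ideal_iff_image_le
    (B : Type) [Ring B] [Algebra ℚ B] [FiniteDimensional ℚ B] [IsSemisimpleRing B]
    (M : Subalgebra ℚ B) [IsSemisimpleRing M]
    (π : B) (hπ : IsIdempotentElem π) (hcentral : ∀ x : B, π * x = x * π)
    (hgen : Algebra.adjoin ℚ ((M : Set B) ∪ {π}) = ⊤)
    (V : Type) [AddCommGroup V] [Module ℚ V] [Module B V]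
    [IsScalarTower ℚ B V] [FaithfulSMul B V]
    (u : B) (hu : IsIdempotentElem u) (b : B) :
    (∃ x y : B, b = u * x + π * y) ↔
      (∀ v w : V, ∃ s t : V, b • v + π • w = u • s + π • t) := by
  constructor
  · rintro ⟨x, y, rfl⟩ v w
    exact ⟨x • v, y • v + w, by rw [add_smul, mul_smul, mul_smul, smul_add, add_assoc]⟩
  · intro h
    have e : (1 - π) * b = u * ((1 - π) * b) := by
      apply eq_of_smul_eq_smul (M := B) (α := V)
      intro v
      obtain ⟨s, t, hst⟩ := h v 0
      rw [smul_zero, add_zero] at hst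
      have h1 : (1 - π) * π = 0 := by
        rw [sub_mul, one_mul, hπ.eq, sub_self]
      have h2 : u * (1 - π) = (1 - π) * u := by
        rw [mul_sub, sub_mul, mul_one, one_mul, hcentral]
      have step : ∀ c : B, (c * ((1 - π) * b)) • v = (c * ((1 - π) * u)) • s := by
        intro c
        rw [mul_smul, mul_smul c, mul_smul, hst, smul_add, smul_smul (1 - π) π,
          h1, zero_smul, add_zero, smul_smul, smul_smul, mul_assoc]
        exact mul_smul c ((1 - π) * u) s
      have l : ((1 - π) * b) • v = ((1 - π) * u) • s := by
        have := step 1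
        simpa using this
      rw [l, step u, ← mul_assoc, h2, mul_assoc, hu.eq]
    refine ⟨(1 - π) * b, b, ?_⟩
    rw [← e, sub_mul, one_mul, sub_add_cancel]
end
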